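/- If ℱ ⊆ 2^[t] is a family of odd-sized sets such that every pairwise intersection of two distinct members also has odd size, then |ℱ| ≤ 2^{(t-1)/2}. -/

import Mathlib

/-
A family of sets with all sizes and all pairwise intersections odd gives characteristic vectors
`v_A ∈ 𝔽₂ᵗ` with `v_A ⬝ v_B = 1` for all `A, B ∈ ℱ`. Fixing `A₀ ∈ ℱ`, the differences
`v_A - v_{A₀}` span a totally isotropic subspace `U`, and `v_{A₀}` is orthogonal to `U` but not
isotropic, so `U ⊕ ⟨v_{A₀}⟩ ⊆ U^⊥`. Hence `2 dim U + 1 ≤ t`, while `A ↦ v_A - v_{A₀}` embeds `ℱ`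
into `U`, giving `|ℱ| ≤ 2^{dim U} ≤ 2^{(t-1)/2}`.
-/

open Module Finset

theorem Submodule.card_le_of_coe_subset {K V : Type*} [Field K] [AddCommGroup V] [Module K V]
    [Finite K] [FiniteDimensional K V] (U : Submodule K V) {s : Finset V}
    (hs : (s : Set V) ⊆ U) : s.card ≤ Nat.card K ^ finrank K U := by
  rw [← natCard_eq_pow_finrank, ← Set.ncard_coe_finset, ← SetLike.coe_sort_coe,
    Nat.card_coe_set_eq]
  have : Finite V := Module.finite_of_finite K
  exact Set.ncard_le_ncard hs

namespace LinearMap.BilinForm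

variable {K V : Type*} [Field K] [AddCommGroup V] [Module K V] {B : LinearMap.BilinForm K V}

theorem mem_orthogonal_span_of_forall {G : Set V} {v : V} (h : ∀ x ∈ G, B x v = 0) :
    v ∈ B.orthogonal (Submodule.span K G) :=
  mem_orthogonal_iff.2 fun _ hn => Submodule.span_le (p := LinearMap.ker (B.flip v)).2 h hn

theorem span_le_orthogonal_span {G : Set V} (h : ∀ x ∈ G, ∀ y ∈ G, B x y = 0) :
    Submodule.span K G ≤ B.orthogonal (Submodule.span K G) :=
  Submodule.span_le.2 fun y hy => mem_orthogonal_span_of_forall fun x hx => h x hx y hy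

theorem two_mul_finrank_lt_of_le_orthogonal [FiniteDimensional K V] (hB : B.Nondegenerate)
    {U : Submodule K V} (hU : U ≤ B.orthogonal U) {v : V} (hvU : v ∈ B.orthogonal U)
    (hv : B v v ≠ 0) : 2 * finrank K U < finrank K V := by
  have hv_notMem : v ∉ U := fun h => hv ((mem_orthogonal_iff.1 hvU) v h)
  have hlt : finrank K U < finrank K (B.orthogonal U) :=
    Submodule.finrank_lt_finrank_of_lt (lt_of_le_of_ne hU fun h => hv_notMem (h ▸ hvU))
  have := Submodule.finrank_le U
  rw [finrank_orthogonal hB] at hlt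
  omega

theorem card_sq_mul_le_of_forall_apply_eq_one [Finite K] [FiniteDimensional K V]
    (hB : B.Nondegenerate) {s : Finset V} (hs : ∀ x ∈ s, ∀ y ∈ s, B x y = 1) :
    s.card ^ 2 * Nat.card K ≤ Nat.card K ^ finrank K V := by
  classical
  rcases s.eq_empty_or_nonempty with rfl | ⟨v₀, hv₀⟩
  · simp
  set U := Submodule.span K ((· - v₀) '' (s : Set V))
  have hU : U ≤ B.orthogonal U := span_le_orthogonal_span <| by
    rintro _ ⟨x, hx, rfl⟩ _ ⟨y, hy, rfl⟩
    simp [hs x hx y hy, hs x hx v₀ hv₀, hs v₀ hv₀ y hy, hs v₀ hv₀ v₀ hv₀]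
  have hv₀U : v₀ ∈ B.orthogonal U := mem_orthogonal_span_of_forall <| by
    rintro _ ⟨x, hx, rfl⟩
    simp [hs x hx v₀ hv₀, hs v₀ hv₀ v₀ hv₀]
  have hdim : 2 * finrank K U + 1 ≤ finrank K V :=
    two_mul_finrank_lt_of_le_orthogonal hB hU hv₀U (by simp [hs v₀ hv₀ v₀ hv₀])
  have hcard : s.card ≤ Nat.card K ^ finrank K U := by
    rw [← s.card_image_of_injective (sub_left_injective (b := v₀))]
    exact U.card_le_of_coe_subset (by rw [coe_image]; exact Submodule.subset_span)
  calc s.card ^ 2 * Nat.card K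
      ≤ (Nat.card K ^ finrank K U) ^ 2 * Nat.card K := by gcongr
    _ = Nat.card K ^ (2 * finrank K U + 1) := by ring
    _ ≤ Nat.card K ^ finrank K V := Nat.pow_le_pow_right Nat.card_pos hdim

end LinearMap.BilinForm

def charVec {α : Type*} [DecidableEq α] (R : Type*) [Zero R] [One R] (A : Finset α) : α → R :=
  fun i => if i ∈ A then 1 else 0

theorem charVec_injective {α R : Type*} [DecidableEq α] [Zero R] [One R] [NeZero (1 : R)] :
    Function.Injective (charVec (α := α) R) := by
  intro A C h
  ext i
  have := congrFun h i
  by_cases hA : i ∈ A <;> by_cases hC : i ∈ C <;> simp_all [charVec]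

theorem charVec_dotProduct_charVec {α R : Type*} [Fintype α] [DecidableEq α]
    [NonAssocSemiring R] (A C : Finset α) :
    charVec R A ⬝ᵥ charVec R C = (A ∩ C).card := by
  simp only [dotProduct, charVec, ite_mul, one_mul, zero_mul, ← ite_and, ← mem_inter,
    sum_ite_mem, univ_inter, sum_const, nsmul_eq_mul, mul_one]

theorem le_two_rpow_of_sq_mul_two_le {n t : ℕ} (h : n ^ 2 * 2 ≤ 2 ^ t) :
    (n : ℝ) ≤ 2 ^ (((t : ℝ) - 1) / 2) := by
  have hsq : (n : ℝ) ^ 2 ≤ (2 ^ (((t : ℝ) - 1) / 2)) ^ 2 := by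
    rw [← Real.rpow_natCast (2 ^ _) 2, ← Real.rpow_mul (by norm_num), Nat.cast_ofNat,
      div_mul_cancel₀ _ two_ne_zero, Real.rpow_sub two_pos, Real.rpow_one, Real.rpow_natCast,
      le_div_iff₀ two_pos]
    exact_mod_cast h
  exact (pow_le_pow_iff_left₀ (by positivity) (by positivity) two_ne_zero).1 hsq

/-- Reverse Oddtown bound: if every member of `ℱ ⊆ 2^[t]` has odd size and every pairwise
intersection of distinct members also has odd size, then `|ℱ| ≤ 2^((t-1)/2)`. -/
theorem reverse_oddtown {t : ℕ} (ℱ : Finset (Finset (Fin t)))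
    (hodd : ∀ A ∈ ℱ, Odd A.card)
    (hint : ∀ A ∈ ℱ, ∀ B ∈ ℱ, A ≠ B → Odd ((A ∩ B).card)) :
    (ℱ.card : ℝ) ≤ (2 : ℝ) ^ (((t : ℝ) - 1) / 2) := by
  set B := Matrix.toBilin' (1 : Matrix (Fin t) (Fin t) (ZMod 2))
  have hB : B.Nondegenerate :=
    LinearMap.BilinForm.nondegenerate_toBilin'_of_det_ne_zero' _ (by simp)
  have hone : ∀ v ∈ ℱ.image (charVec (ZMod 2)), ∀ w ∈ ℱ.image (charVec (ZMod 2)),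
      B v w = 1 := by
    simp only [forall_mem_image]
    intro A hA C hC
    rw [Matrix.toBilin'_apply', Matrix.one_mulVec, charVec_dotProduct_charVec,
      ZMod.natCast_eq_one_iff_odd]
    rcases eq_or_ne A C with rfl | hAC
    · simpa using hodd A hA
    · exact hint A hA C hC hAC
  have key := LinearMap.BilinForm.card_sq_mul_le_of_forall_apply_eq_one hB hone
  rw [card_image_of_injective _ charVec_injective, Nat.card_zmod, finrank_fin_fun] at key
  exact le_two_rpow_of_sq_mul_two_le key
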